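/- arXiv:2403.15683 — 2 statements merged into one kernel-verified Lean document; each statement's English description precedes it below -/
import Mathlib

section
/- For a connected undirected graph G on N vertices with at least one edge, the potential function Φ(a) = (1/2) aᵀ A a - (θ/N) aᵀ A 𝟙 over a ∈ {0,1}^N attains its maximum only at the all-zeros profile if θ > N/2, only at the all-ones profile if θ < N/2, and exactly at these two profiles (with common value 0) if θ = N/2. In particular the maximizer set is always contained in {𝟘, 𝟙}. -/
open Matrix Finset SimpleGraph

/-- Embedding of binary action profiles into ℝ^N. -/
def emb {N : ℕ} (a : Fin N → Bool) : Fin N → ℝ := fun i => if a i then 1 else 0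

/-- The potential function Φ(a) = (1/2) aᵀ A a - (θ/N) aᵀ A 𝟙. -/
noncomputable def Phi {N : ℕ} (A : Matrix (Fin N) (Fin N) ℝ) (θ : ℝ) (x : Fin N → ℝ) : ℝ :=
  (1 / 2) * (x ⬝ᵥ A.mulVec x) - (θ / N) * (x ⬝ᵥ A.mulVec (fun _ => 1))

/-
For a profile a with support S, aᵀ A 𝟙 = degreeSum a is the degree sum of S and
aᵀ A (𝟙 - a) = cutSize a counts the edges leaving S. Since aᵀ A a = degreeSum a - cutSize a,
  Φ(a) = (1/2 - θ/N) degreeSum a - (1/2) cutSize a,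
  Φ(𝟙) - Φ(a) = (1/2 - θ/N) degreeSum (¬a) + (1/2) cutSize a.
In a connected graph with an edge every vertex has a neighbour, so degreeSum a > 0 unless S = ∅,
and cutSize a > 0 unless S is empty or everything. Reading off signs gives the three cases.
-/

theorem SimpleGraph.Preconnected.exists_adj_of_mem_of_not_mem {V : Type*} {G : SimpleGraph V}
    (hG : G.Preconnected) {S : Set V} {u v : V} (hu : u ∈ S) (hv : v ∉ S) :
    ∃ x ∈ S, ∃ y ∉ S, G.Adj x y := by
  obtain ⟨p⟩ := hG u v
  obtain ⟨d, -, hd₁, hd₂⟩ := p.exists_boundary_dart S hu hv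
  exact ⟨d.fst, hd₁, d.snd, hd₂, d.adj⟩

section AdjMatrix

variable {V R : Type*} [Fintype V] (G : SimpleGraph V) [DecidableRel G.Adj]
  [Semiring R] [PartialOrder R] [IsStrictOrderedRing R]

theorem SimpleGraph.dotProduct_adjMatrix_mulVec_nonneg {x y : V → R} (hx : 0 ≤ x) (hy : 0 ≤ y) :
    0 ≤ x ⬝ᵥ G.adjMatrix R *ᵥ y :=
  dotProduct_nonneg_of_nonneg hx fun i => by
    rw [Pi.zero_apply, adjMatrix_mulVec_apply]
    exact sum_nonneg fun j _ => hy j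

theorem SimpleGraph.dotProduct_adjMatrix_mulVec_pos {x y : V → R} (hx : 0 ≤ x) (hy : 0 ≤ y)
    {u v : V} (huv : G.Adj u v) (hu : 0 < x u) (hv : 0 < y v) :
    0 < x ⬝ᵥ G.adjMatrix R *ᵥ y := by
  refine sum_pos' (fun i _ => mul_nonneg (hx i) ?_) ⟨u, mem_univ u, mul_pos hu ?_⟩
  all_goals rw [adjMatrix_mulVec_apply]
  · exact sum_nonneg fun j _ => hy j
  · exact lt_of_lt_of_le hv <|
      single_le_sum (fun j _ => hy j) ((mem_neighborFinset G u v).2 huv)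

end AdjMatrix

section Profiles

variable {N : ℕ}

@[simp]
theorem emb_false : emb (fun _ : Fin N => false) = 0 := by
  ext; simp [emb]

@[simp]
theorem emb_true : emb (fun _ : Fin N => true) = fun _ => 1 := by
  ext; simp [emb]

theorem emb_nonneg (a : Fin N → Bool) : 0 ≤ emb a := fun i => by
  unfold emb; split <;> norm_num

theorem emb_pos {a : Fin N → Bool} {i : Fin N} (h : a i = true) : 0 < emb a i := by
  simp [emb, h]

theorem emb_add_emb_not (a : Fin N → Bool) : emb a + emb (fun i => !a i) = fun _ => 1 := by
  ext i; cases h : a i <;> simp [emb, h]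

variable (G : SimpleGraph (Fin N)) [DecidableRel G.Adj]

noncomputable def degreeSum (a : Fin N → Bool) : ℝ :=
  emb a ⬝ᵥ G.adjMatrix ℝ *ᵥ fun _ => 1

noncomputable def cutSize (a : Fin N → Bool) : ℝ :=
  emb a ⬝ᵥ G.adjMatrix ℝ *ᵥ emb fun i => !a i

theorem cutSize_nonneg (a : Fin N → Bool) : 0 ≤ cutSize G a :=
  G.dotProduct_adjMatrix_mulVec_nonneg (emb_nonneg a) (emb_nonneg _)

theorem cutSize_true : cutSize G (fun _ => true) = 0 := by
  simp [cutSize]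

theorem degreeSum_add_degreeSum_not (a : Fin N → Bool) :
    degreeSum G a + degreeSum G (fun i => !a i) = degreeSum G fun _ => true := by
  rw [degreeSum, degreeSum, degreeSum, ← add_dotProduct, emb_add_emb_not, emb_true]

theorem degreeSum_pos (hdeg : ∀ v, ∃ w, G.Adj v w) {a : Fin N → Bool} (ha : a ≠ fun _ => false) :
    0 < degreeSum G a := by
  obtain ⟨u, hu⟩ := Function.ne_iff.1 ha
  obtain ⟨w, huw⟩ := hdeg u
  exact G.dotProduct_adjMatrix_mulVec_pos (emb_nonneg a) (fun _ => zero_le_one) huw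
    (emb_pos (by simpa using hu)) one_pos

theorem cutSize_pos (hG : G.Connected) {a : Fin N → Bool} (h₀ : a ≠ fun _ => false)
    (h₁ : a ≠ fun _ => true) : 0 < cutSize G a := by
  obtain ⟨u, hu⟩ := Function.ne_iff.1 h₀
  obtain ⟨v, hv⟩ := Function.ne_iff.1 h₁
  obtain ⟨x, hx, y, hy, hxy⟩ := hG.preconnected.exists_adj_of_mem_of_not_mem
    (S := {i | a i = true}) (u := u) (v := v) (by simpa using hu) hv
  exact G.dotProduct_adjMatrix_mulVec_pos (emb_nonneg a) (emb_nonneg _) hxy (emb_pos hx)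
    (emb_pos (by simpa using hy))

theorem phi_emb_eq (θ : ℝ) (a : Fin N → Bool) :
    Phi (G.adjMatrix ℝ) θ (emb a) = (1 / 2 - θ / N) * degreeSum G a - 1 / 2 * cutSize G a := by
  have h : degreeSum G a = emb a ⬝ᵥ G.adjMatrix ℝ *ᵥ emb a + cutSize G a := by
    rw [degreeSum, cutSize, ← dotProduct_add, ← mulVec_add, emb_add_emb_not]
  unfold degreeSum cutSize at h ⊢
  rw [Phi]
  linarith

theorem phi_emb_false (θ : ℝ) : Phi (G.adjMatrix ℝ) θ (emb fun _ => false) = 0 := by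
  simp [Phi]

theorem phi_emb_true (θ : ℝ) :
    Phi (G.adjMatrix ℝ) θ (emb fun _ => true) = (1 / 2 - θ / N) * degreeSum G fun _ => true := by
  rw [phi_emb_eq, cutSize_true]
  ring

variable {G}

theorem phi_emb_neg (hdeg : ∀ v, ∃ w, G.Adj v w) {θ : ℝ} (hθ : 1 / 2 < θ / N)
    {a : Fin N → Bool} (ha : a ≠ fun _ => false) : Phi (G.adjMatrix ℝ) θ (emb a) < 0 := by
  rw [phi_emb_eq]
  nlinarith [degreeSum_pos G hdeg ha, cutSize_nonneg G a]

theorem phi_emb_lt_phi_emb_true (hdeg : ∀ v, ∃ w, G.Adj v w) {θ : ℝ} (hθ : θ / N < 1 / 2)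
    {a : Fin N → Bool} (ha : a ≠ fun _ => true) :
    Phi (G.adjMatrix ℝ) θ (emb a) < Phi (G.adjMatrix ℝ) θ (emb fun _ => true) := by
  have hnot : (fun i => !a i) ≠ fun _ => false := fun h =>
    ha (funext fun i => by simpa using congrFun h i)
  rw [phi_emb_eq, phi_emb_true, ← degreeSum_add_degreeSum_not G a]
  nlinarith [degreeSum_pos G hdeg hnot, cutSize_nonneg G a]

theorem phi_emb_of_div_eq_half {θ : ℝ} (hθ : θ / N = 1 / 2) (a : Fin N → Bool) :
    Phi (G.adjMatrix ℝ) θ (emb a) = -(1 / 2) * cutSize G a := by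
  rw [phi_emb_eq, hθ]
  ring

end Profiles

theorem forall_le_iff_of_lt {α β : Type*} [LinearOrder β] {f : α → β} {P : α → Prop} {m : β}
    (hex : ∃ a, P a) (heq : ∀ a, P a → f a = m) (hlt : ∀ a, ¬P a → f a < m) (a : α) :
    (∀ b, f b ≤ f a) ↔ P a := by
  refine ⟨fun hmax => ?_, fun ha b => ?_⟩
  · obtain ⟨a₀, ha₀⟩ := hex
    by_contra ha
    exact (hlt a ha).not_ge (heq a₀ ha₀ ▸ hmax a₀)
  · rw [heq a ha]
    by_cases hb : P b
    · exact (heq b hb).le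
    · exact (hlt b hb).le

theorem stmt_3_general (N : ℕ) (G : SimpleGraph (Fin N)) [DecidableRel G.Adj]
    (hconn : G.Connected) (hedge : ∃ i j, G.Adj i j) (θ : ℝ) :
    (θ > (N : ℝ) / 2 →
      ∀ a : Fin N → Bool,
        (∀ b : Fin N → Bool, Phi (G.adjMatrix ℝ) θ (emb b) ≤ Phi (G.adjMatrix ℝ) θ (emb a)) ↔
          a = fun _ => false) ∧
    (θ < (N : ℝ) / 2 →
      ∀ a : Fin N → Bool,
        (∀ b : Fin N → Bool, Phi (G.adjMatrix ℝ) θ (emb b) ≤ Phi (G.adjMatrix ℝ) θ (emb a)) ↔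
          a = fun _ => true) ∧
    (θ = (N : ℝ) / 2 →
      (∀ a : Fin N → Bool,
        (∀ b : Fin N → Bool, Phi (G.adjMatrix ℝ) θ (emb b) ≤ Phi (G.adjMatrix ℝ) θ (emb a)) ↔
          (a = (fun _ => false) ∨ a = fun _ => true)) ∧
      Phi (G.adjMatrix ℝ) θ (emb (fun _ => false)) = 0 ∧
      Phi (G.adjMatrix ℝ) θ (emb (fun _ => true)) = 0) := by
  obtain ⟨u, v, huv⟩ := hedge
  have hN : (0 : ℝ) < N := by exact_mod_cast u.pos
  have : Nontrivial (Fin N) := ⟨⟨u, v, huv.ne⟩⟩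
  have hdeg : ∀ v, ∃ w, G.Adj v w := fun v =>
    (G.degree_pos_iff_exists_adj v).1 (hconn.preconnected.degree_pos_of_nontrivial v)
  refine ⟨fun hθ => ?_, fun hθ => ?_, fun hθ => ?_⟩
  · have hc : 1 / 2 < θ / N := by rw [lt_div_iff₀ hN]; linarith
    exact forall_le_iff_of_lt ⟨_, rfl⟩ (fun _ ha => ha ▸ phi_emb_false G θ)
      fun _ ha => phi_emb_neg hdeg hc ha
  · have hc : θ / N < 1 / 2 := by rw [div_lt_iff₀ hN]; linarith
    exact forall_le_iff_of_lt ⟨_, rfl⟩ (fun _ ha => by rw [ha])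
      fun _ ha => phi_emb_lt_phi_emb_true hdeg hc ha
  · have hc : θ / N = 1 / 2 := by rw [hθ]; field_simp
    have hΦ₁ : Phi (G.adjMatrix ℝ) θ (emb fun _ => true) = 0 := by
      rw [phi_emb_of_div_eq_half hc, cutSize_true, mul_zero]
    refine ⟨forall_le_iff_of_lt (m := 0) ⟨_, .inl rfl⟩ ?_ fun a ha => ?_, phi_emb_false G θ, hΦ₁⟩
    · rintro a (rfl | rfl)
      exacts [phi_emb_false G θ, hΦ₁]
    · rw [not_or] at ha
      rw [phi_emb_of_div_eq_half hc]
      linarith [cutSize_pos G hconn ha.1 ha.2]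

theorem stmt_3 (N : ℕ) (hN : 2 ≤ N) (G : SimpleGraph (Fin N)) [DecidableRel G.Adj]
    (hconn : G.Connected) (hedge : ∃ i j, G.Adj i j) (θ : ℝ) :
    (θ > (N : ℝ) / 2 →
      ∀ a : Fin N → Bool,
        (∀ b : Fin N → Bool, Phi (G.adjMatrix ℝ) θ (emb b) ≤ Phi (G.adjMatrix ℝ) θ (emb a)) ↔
          a = fun _ => false) ∧
    (θ < (N : ℝ) / 2 →
      ∀ a : Fin N → Bool,
        (∀ b : Fin N → Bool, Phi (G.adjMatrix ℝ) θ (emb b) ≤ Phi (G.adjMatrix ℝ) θ (emb a)) ↔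
          a = fun _ => true) ∧
    (θ = (N : ℝ) / 2 →
      (∀ a : Fin N → Bool,
        (∀ b : Fin N → Bool, Phi (G.adjMatrix ℝ) θ (emb b) ≤ Phi (G.adjMatrix ℝ) θ (emb a)) ↔
          (a = (fun _ => false) ∨ a = fun _ => true)) ∧
      Phi (G.adjMatrix ℝ) θ (emb (fun _ => false)) = 0 ∧
      Phi (G.adjMatrix ℝ) θ (emb (fun _ => true)) = 0) :=
  stmt_3_general N G hconn hedge θ
end

section
/- Let G be a connected undirected graph on N vertices with θ < N/2, and let G_s be obtained from G by adding one edge between nonadjacent vertices i and j. Then the Gibbs stationary probability of the all-ones profile strictly increases: μ_{G_s}(𝟙 | β) > μ_G(𝟙 | β) for every β > 0, where μ_G(a|β) = exp(βΦ_G(a)) / Σ_{a'∈{0,1}^N} exp(βΦ_G(a')) and Φ_G(a) = (1/2)aᵀA_G a - (θ/N)aᵀA_G 𝟙. -/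
open Matrix Finset SimpleGraph

/-- Gibbs stationary distribution of log-linear learning with rationality β. -/
noncomputable def mu {N : ℕ} (A : Matrix (Fin N) (Fin N) ℝ) (θ β : ℝ)
    (a : Fin N → Bool) : ℝ :=
  Real.exp (β * Phi A θ (emb a)) /
    ∑ a' : Fin N → Bool, Real.exp (β * Phi A θ (emb a'))

/- Adding the edge {i, j} raises Φ(a) by aᵢaⱼ - (θ/N)(aᵢ + aⱼ). This increment is at most
1 - 2θ/N, attained at 𝟙, and strictly smaller at the all-zeros profile since θ < N/2. Hence
the partition function grows by a factor strictly less than exp(β(1 - 2θ/N)), while the weight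
of 𝟙 grows by exactly that factor. -/

lemma dotProduct_single_one_mulVec {n R : Type*} [Fintype n] [DecidableEq n] [NonAssocSemiring R]
    (i j : n) (x y : n → R) : x ⬝ᵥ single i j (1 : R) *ᵥ y = x i * y j := by
  rw [single_mulVec, one_mul]
  exact dotProduct_single x (y j) i

lemma Phi_add_single_add_single {N : ℕ} (A : Matrix (Fin N) (Fin N) ℝ) (θ : ℝ) (i j : Fin N)
    (x : Fin N → ℝ) :
    Phi (A + single i j 1 + single j i 1) θ x =
      Phi A θ x + (x i * x j - θ / N * (x i + x j)) := by
  simp only [Phi, add_mulVec, dotProduct_add, dotProduct_single_one_mulVec]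
  ring

lemma emb_eq_zero_or_one {N : ℕ} (a : Fin N → Bool) (k : Fin N) :
    emb a k = 0 ∨ emb a k = 1 := by
  unfold emb; split_ifs <;> simp

lemma mul_sub_mul_add_le_of_zero_or_one {t x y : ℝ} (ht : t ≤ 1 / 2) (hx : x = 0 ∨ x = 1)
    (hy : y = 0 ∨ y = 1) : x * y - t * (x + y) ≤ 1 - t * 2 := by
  rcases hx with rfl | rfl <;> rcases hy with rfl | rfl <;> linarith

lemma div_sum_exp_lt_of_le_add {α : Type*} [Fintype α] {f g : α → ℝ} {β c : ℝ} (hβ : 0 < β)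
    {a₀ b : α} (hle : ∀ a, g a ≤ f a + c) (ha₀ : g a₀ = f a₀ + c) (hb : g b < f b + c) :
    Real.exp (β * f a₀) / ∑ a, Real.exp (β * f a) <
      Real.exp (β * g a₀) / ∑ a, Real.exp (β * g a) := by
  have hZf : 0 < ∑ a, Real.exp (β * f a) := sum_pos (fun _ _ ↦ Real.exp_pos _) ⟨a₀, mem_univ _⟩
  have hZg : 0 < ∑ a, Real.exp (β * g a) := sum_pos (fun _ _ ↦ Real.exp_pos _) ⟨a₀, mem_univ _⟩
  have hZ : ∑ a, Real.exp (β * g a) < Real.exp (β * c) * ∑ a, Real.exp (β * f a) := by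
    rw [mul_sum]
    refine sum_lt_sum (fun a _ ↦ ?_) ⟨b, mem_univ _, ?_⟩ <;> rw [← Real.exp_add]
    · exact Real.exp_le_exp.2 (by nlinarith [hle a])
    · exact Real.exp_lt_exp.2 (by nlinarith)
  rw [div_lt_div_iff₀ hZf hZg, ha₀, mul_add, Real.exp_add, mul_assoc]
  exact mul_lt_mul_of_pos_left hZ (Real.exp_pos _)

theorem stmt_7_general (N : ℕ) (G : SimpleGraph (Fin N)) [DecidableRel G.Adj]
    (θ : ℝ) (hθ : θ < (N : ℝ) / 2)
    (i j : Fin N) (β : ℝ) (hβ : 0 < β) :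
    mu (G.adjMatrix ℝ + Matrix.single i j 1 + Matrix.single j i 1) θ β
        (fun _ => true) >
      mu (G.adjMatrix ℝ) θ β (fun _ => true) := by
  have hN : (0 : ℝ) < N := by exact_mod_cast Fin.pos i
  have ht : θ / N < 1 / 2 := by rw [div_lt_div_iff₀ hN two_pos]; linarith
  unfold mu
  refine div_sum_exp_lt_of_le_add (f := fun a ↦ Phi (G.adjMatrix ℝ) θ (emb a))
    (g := fun a ↦ Phi (G.adjMatrix ℝ + single i j 1 + single j i 1) θ (emb a)) hβ
    (c := 1 - θ / N * 2) (b := fun _ ↦ false) (fun a ↦ ?_) ?_ ?_ <;>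
    rw [Phi_add_single_add_single]
  · linarith [mul_sub_mul_add_le_of_zero_or_one ht.le (emb_eq_zero_or_one a i)
      (emb_eq_zero_or_one a j)]
  · simp only [emb, if_true]; ring
  · simp only [emb, Bool.false_eq_true, if_false]; linarith

theorem stmt_7 (N : ℕ) (G : SimpleGraph (Fin N)) [DecidableRel G.Adj]
    (hconn : G.Connected) (θ : ℝ) (hθ : θ < (N : ℝ) / 2)
    (i j : Fin N) (hij : i ≠ j) (hnadj : ¬ G.Adj i j) (β : ℝ) (hβ : 0 < β) :
    mu (G.adjMatrix ℝ + Matrix.single i j 1 + Matrix.single j i 1) θ β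
        (fun _ => true) >
      mu (G.adjMatrix ℝ) θ β (fun _ => true) :=
  stmt_7_general N G θ hθ i j β hβ
end
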